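/- arXiv:2303.15408 — 2 statements merged into one kernel-verified Lean document; each statement's English description precedes it below -/
import Mathlib

section
/- For m ≥ 3 and 0 ≤ r₁ < r₂, the number r_* = ((2/m)·(r₂^m − r₁^m)/(r₂² − r₁²))^{1/(m−2)} satisfies r₁ < r_* < r₂. -/
open intervalIntegral in
lemma key_ineq (n : ℕ) (hn : 1 ≤ n) (r₁ r₂ : ℝ) (h₁ : 0 ≤ r₁) (h₁₂ : r₁ < r₂) :
    r₁ ^ n * ((r₂ ^ 2 - r₁ ^ 2) / 2) < (r₂ ^ (n + 2) - r₁ ^ (n + 2)) / (n + 2) ∧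
    (r₂ ^ (n + 2) - r₁ ^ (n + 2)) / (n + 2) < r₂ ^ n * ((r₂ ^ 2 - r₁ ^ 2) / 2) := by
  have h₂ : 0 < r₂ := h₁.trans_lt h₁₂
  have hmid : (r₁ + r₂) / 2 ∈ Set.Icc r₁ r₂ := ⟨by linarith, by linarith⟩
  have hmidpos : 0 < (r₁ + r₂) / 2 := by linarith
  have hI1 : ∫ x in r₁..r₂, x = (r₂ ^ 2 - r₁ ^ 2) / 2 := by
    simpa using integral_pow (a := r₁) (b := r₂) 1
  have hI2 : ∫ x in r₁..r₂, x ^ (n + 1) = (r₂ ^ (n + 2) - r₁ ^ (n + 2)) / (n + 2) := by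
    rw [integral_pow]
    push_cast
    ring_nf
  constructor
  · have h := integral_lt_integral_of_continuousOn_of_le_of_exists_lt (f := fun x => r₁ ^ n * x)
      (g := fun x => x ^ (n + 1)) h₁₂ (by fun_prop) (by fun_prop)
      (fun x hx => by
        have hx0 : 0 < x := lt_of_le_of_lt h₁ hx.1
        have : r₁ ^ n ≤ x ^ n := pow_le_pow_left₀ h₁ hx.1.le n
        calc r₁ ^ n * x ≤ x ^ n * x := by nlinarith
          _ = x ^ (n + 1) := by ring)
      ⟨(r₁ + r₂) / 2, hmid, by
        have : r₁ ^ n < ((r₁ + r₂) / 2) ^ n :=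
          pow_lt_pow_left₀ (by linarith) h₁ (by omega)
        calc r₁ ^ n * ((r₁ + r₂) / 2) < ((r₁ + r₂) / 2) ^ n * ((r₁ + r₂) / 2) := by nlinarith
          _ = ((r₁ + r₂) / 2) ^ (n + 1) := by ring⟩
    rw [hI2] at h
    calc r₁ ^ n * ((r₂ ^ 2 - r₁ ^ 2) / 2) = ∫ x in r₁..r₂, r₁ ^ n * x := by
          rw [integral_const_mul, hI1]
      _ < _ := h
  · have h := integral_lt_integral_of_continuousOn_of_le_of_exists_lt (g := fun x => r₂ ^ n * x)
      (f := fun x => x ^ (n + 1)) h₁₂ (by fun_prop) (by fun_prop)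
      (fun x hx => by
        have hx0 : 0 < x := lt_of_le_of_lt h₁ hx.1
        have : x ^ n ≤ r₂ ^ n := pow_le_pow_left₀ hx0.le hx.2 n
        calc x ^ (n + 1) = x ^ n * x := by ring
          _ ≤ r₂ ^ n * x := by nlinarith)
      ⟨(r₁ + r₂) / 2, hmid, by
        have : ((r₁ + r₂) / 2) ^ n < r₂ ^ n :=
          pow_lt_pow_left₀ (by linarith) (by linarith) (by omega)
        calc ((r₁ + r₂) / 2) ^ (n + 1) = ((r₁ + r₂) / 2) ^ n * ((r₁ + r₂) / 2) := by ring
          _ < r₂ ^ n * ((r₁ + r₂) / 2) := by nlinarith⟩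
    rw [hI2] at h
    calc (r₂ ^ (n + 2) - r₁ ^ (n + 2)) / (n + 2) < ∫ x in r₁..r₂, r₂ ^ n * x := h
      _ = r₂ ^ n * ((r₂ ^ 2 - r₁ ^ 2) / 2) := by rw [integral_const_mul, hI1]

/-- The Armitage–Goldstein quadrature radius of the annulus lies strictly between
the two radii, for `m ≥ 3`. -/
theorem armitage_goldstein_radius_mem (m : ℕ) (hm : 3 ≤ m) (r₁ r₂ : ℝ)
    (h₁ : 0 ≤ r₁) (h₁₂ : r₁ < r₂) :
    r₁ < ((2 / (m : ℝ)) * (r₂ ^ m - r₁ ^ m) / (r₂ ^ 2 - r₁ ^ 2)) ^ ((1 : ℝ) / ((m : ℝ) - 2)) ∧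
    ((2 / (m : ℝ)) * (r₂ ^ m - r₁ ^ m) / (r₂ ^ 2 - r₁ ^ 2)) ^ ((1 : ℝ) / ((m : ℝ) - 2)) < r₂ := by
  obtain ⟨n, rfl⟩ : ∃ n, m = n + 2 := ⟨m - 2, by omega⟩
  have hn : 1 ≤ n := by omega
  have h₂ : 0 < r₂ := h₁.trans_lt h₁₂
  have hD : 0 < r₂ ^ 2 - r₁ ^ 2 := by nlinarith
  have hmpos : (0:ℝ) < (n:ℝ) + 2 := by positivity
  obtain ⟨hlo, hhi⟩ := key_ineq n hn r₁ r₂ h₁ h₁₂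
  set K : ℝ := 2 / ((n:ℝ) + 2) * (r₂ ^ (n + 2) - r₁ ^ (n + 2)) / (r₂ ^ 2 - r₁ ^ 2) with hK
  have hDm : (0:ℝ) < ((n:ℝ) + 2) * (r₂ ^ 2 - r₁ ^ 2) := by positivity
  have hKlo : r₁ ^ n < K := by
    rw [hK, div_mul_eq_mul_div, div_div, lt_div_iff₀ hDm]
    rw [lt_div_iff₀ hmpos] at hlo
    linarith
  have hKhi : K < r₂ ^ n := by
    rw [hK, div_mul_eq_mul_div, div_div, div_lt_iff₀ hDm]
    rw [div_lt_iff₀ hmpos] at hhi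
    linarith
  have hcast : ((n:ℝ) + 2) - 2 = (n:ℝ) := by ring
  have hnR : (0:ℝ) < (n:ℝ) := by exact_mod_cast hn
  have hexp : (0:ℝ) < 1 / (n:ℝ) := by positivity
  have hK0 : 0 ≤ K := le_trans (pow_nonneg h₁ n) hKlo.le
  have hid : ∀ r : ℝ, 0 ≤ r → (r ^ n) ^ ((1:ℝ)/(n:ℝ)) = r := by
    intro r hr
    rw [← Real.rpow_natCast r n, ← Real.rpow_mul hr]
    rw [mul_one_div, div_self hnR.ne', Real.rpow_one]
  have goal1 : r₁ < K ^ ((1:ℝ)/(n:ℝ)) := by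
    calc r₁ = (r₁ ^ n) ^ ((1:ℝ)/(n:ℝ)) := (hid r₁ h₁).symm
      _ < K ^ ((1:ℝ)/(n:ℝ)) := Real.rpow_lt_rpow (pow_nonneg h₁ n) hKlo hexp
  have goal2 : K ^ ((1:ℝ)/(n:ℝ)) < r₂ := by
    calc K ^ ((1:ℝ)/(n:ℝ)) < (r₂ ^ n) ^ ((1:ℝ)/(n:ℝ)) := Real.rpow_lt_rpow hK0 hKhi hexp
      _ = r₂ := hid r₂ h₂.le
  push_cast
  rw [hcast]
  exact ⟨goal1, goal2⟩
end

section
/- For 0 < r₁ < r₂, the number r_* = exp((r₂² log r₂ − r₁² log r₁)/(r₂² − r₁²) − 1/2) satisfies r₁ < r_* < r₂. -/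
/-- Sakai's quadrature radius for planar annuli lies strictly between the two radii. -/
theorem sakai_radius_mem (r₁ r₂ : ℝ) (h₁ : 0 < r₁) (h₁₂ : r₁ < r₂) :
    r₁ < Real.exp ((r₂ ^ 2 * Real.log r₂ - r₁ ^ 2 * Real.log r₁) / (r₂ ^ 2 - r₁ ^ 2) - 1 / 2) ∧
    Real.exp ((r₂ ^ 2 * Real.log r₂ - r₁ ^ 2 * Real.log r₁) / (r₂ ^ 2 - r₁ ^ 2) - 1 / 2) < r₂ := by
  have h₂ : 0 < r₂ := h₁.trans h₁₂
  have hD : 0 < r₂ ^ 2 - r₁ ^ 2 := by nlinarith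
  set L₁ := Real.log r₁ with hL₁
  set L₂ := Real.log r₂ with hL₂
  have hlog1 : Real.log (r₂ ^ 2 / r₁ ^ 2) = 2 * L₂ - 2 * L₁ := by
    rw [Real.log_div (by positivity) (by positivity), Real.log_pow, Real.log_pow]
    push_cast; ring
  have hlog2 : Real.log (r₁ ^ 2 / r₂ ^ 2) = 2 * L₁ - 2 * L₂ := by
    rw [Real.log_div (by positivity) (by positivity), Real.log_pow, Real.log_pow]
    push_cast; ring
  have hne1 : r₂ ^ 2 / r₁ ^ 2 ≠ 1 := by
    have : 1 < r₂ ^ 2 / r₁ ^ 2 := (one_lt_div (by positivity)).2 (by nlinarith)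
    exact ne_of_gt this
  have hne2 : r₁ ^ 2 / r₂ ^ 2 ≠ 1 := by
    have : r₁ ^ 2 / r₂ ^ 2 < 1 := (div_lt_one (by positivity)).2 (by nlinarith)
    exact ne_of_lt this
  have key1 : 2 * L₂ - 2 * L₁ < r₂ ^ 2 / r₁ ^ 2 - 1 := by
    have := Real.log_lt_sub_one_of_pos (x := r₂ ^ 2 / r₁ ^ 2) (by positivity) hne1
    rwa [hlog1] at this
  have key2 : 2 * L₁ - 2 * L₂ < r₁ ^ 2 / r₂ ^ 2 - 1 := by
    have := Real.log_lt_sub_one_of_pos (x := r₁ ^ 2 / r₂ ^ 2) (by positivity) hne2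
    rwa [hlog2] at this
  -- clear divisions
  have key1' : r₁ ^ 2 * (2 * L₂ - 2 * L₁) < r₂ ^ 2 - r₁ ^ 2 := by
    have h := mul_lt_mul_of_pos_left key1 (show (0:ℝ) < r₁ ^ 2 by positivity)
    have : r₁ ^ 2 * (r₂ ^ 2 / r₁ ^ 2 - 1) = r₂ ^ 2 - r₁ ^ 2 := by
      field_simp
    linarith [h.trans_eq this]
  have key2' : r₂ ^ 2 - r₁ ^ 2 < r₂ ^ 2 * (2 * L₂ - 2 * L₁) := by
    have h := mul_lt_mul_of_pos_left key2 (show (0:ℝ) < r₂ ^ 2 by positivity)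
    have : r₂ ^ 2 * (r₁ ^ 2 / r₂ ^ 2 - 1) = r₁ ^ 2 - r₂ ^ 2 := by
      field_simp
    nlinarith [h.trans_eq this]
  constructor
  · rw [show r₁ = Real.exp L₁ from (Real.exp_log h₁).symm, Real.exp_lt_exp,
      Real.exp_log h₁]
    have : L₁ + 1 / 2 < (r₂ ^ 2 * L₂ - r₁ ^ 2 * L₁) / (r₂ ^ 2 - r₁ ^ 2) := by
      rw [lt_div_iff₀ hD]; nlinarith
    linarith
  · rw [show r₂ = Real.exp L₂ from (Real.exp_log h₂).symm, Real.exp_lt_exp,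
      Real.exp_log h₂]
    have : (r₂ ^ 2 * L₂ - r₁ ^ 2 * L₁) / (r₂ ^ 2 - r₁ ^ 2) < L₂ + 1 / 2 := by
      rw [div_lt_iff₀ hD]; nlinarith
    linarith
end
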